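/- arXiv:2404.07023 — 2 statements merged into one kernel-verified Lean document; each statement's English description precedes it below -/
import Mathlib

section
/- For the Miyamoto–Nagai disk, the maximal allowed constant b ensuring nonnegativity of the azimuthal second moment is b_M = 6/5: i.e., the infimum over z ∈ ℝ of b_M(z) = 6/5 + (14s + 4√(s(6s+15ζ)))/(25ζ), where ζ = √(1+z²), equals 6/5 for every s ≥ 0, and is attained only in the limit |z| → ∞ (for s > 0). -/
/-!
The correction term `b_M - 6/5` is visibly nonnegative, and positive for `s > 0`. In the variable
`u = 1/ζ` it reads `(14 s u + 4 √(s u (6 s u + 15)))/25`, a continuous function of `u` vanishing at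
`u = 0`; since `ζ ≥ |z|`, `u → 0` as `|z| → ∞`, so `b_M → 6/5` there, which also pins down the
infimum.
-/

open Filter Topology

/-- `b_M(z)` for the Miyamoto–Nagai disk. -/
noncomputable def bM_MN (s z : ℝ) : ℝ :=
  6 / 5 + (14 * s + 4 * Real.sqrt (s * (6 * s + 15 * Real.sqrt (1 + z ^ 2))))
    / (25 * Real.sqrt (1 + z ^ 2))

theorem ciInf_eq_of_forall_ge_of_tendsto {ι α : Type*} [ConditionallyCompleteLattice α]
    [TopologicalSpace α] [ClosedIciTopology α] {l : Filter ι} [l.NeBot] {f : ι → α} {a : α}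
    (hle : ∀ i, a ≤ f i) (hf : Tendsto f l (𝓝 a)) : ⨅ i, f i = a :=
  have := l.nonempty_of_neBot
  le_antisymm (ge_of_tendsto hf (.of_forall (ciInf_le ⟨a, Set.forall_mem_range.2 hle⟩)))
    (le_ciInf hle)

namespace MiyamotoNagai

theorem sqrt_one_add_sq_pos (z : ℝ) : 0 < Real.sqrt (1 + z ^ 2) :=
  Real.sqrt_pos.2 (by positivity)

theorem lt_bM_MN {s : ℝ} (hs : 0 < s) (z : ℝ) : 6 / 5 < bM_MN s z := by
  have := sqrt_one_add_sq_pos z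
  unfold bM_MN
  have : 0 < (14 * s + 4 * Real.sqrt (s * (6 * s + 15 * Real.sqrt (1 + z ^ 2))))
      / (25 * Real.sqrt (1 + z ^ 2)) := by positivity
  linarith

theorem le_bM_MN {s : ℝ} (hs : 0 ≤ s) (z : ℝ) : 6 / 5 ≤ bM_MN s z := by
  have := sqrt_one_add_sq_pos z
  unfold bM_MN
  have : 0 ≤ (14 * s + 4 * Real.sqrt (s * (6 * s + 15 * Real.sqrt (1 + z ^ 2))))
      / (25 * Real.sqrt (1 + z ^ 2)) := by positivity
  linarith

theorem bM_MN_eq_inv_sqrt (s z : ℝ) :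
    bM_MN s z = 6 / 5 + (14 * s * (Real.sqrt (1 + z ^ 2))⁻¹ +
      4 * Real.sqrt (s * (Real.sqrt (1 + z ^ 2))⁻¹ * (6 * s * (Real.sqrt (1 + z ^ 2))⁻¹ + 15))) / 25 := by
  rw [bM_MN]
  set ζ := Real.sqrt (1 + z ^ 2)
  have hζ : 0 < ζ := sqrt_one_add_sq_pos z
  have hradicand : s * ζ⁻¹ * (6 * s * ζ⁻¹ + 15) = s * (6 * s + 15 * ζ) * ζ⁻¹ ^ 2 := by
    field_simp
  rw [hradicand, Real.sqrt_mul' _ (sq_nonneg ζ⁻¹), Real.sqrt_sq (by positivity)]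
  field_simp

theorem tendsto_inv_sqrt_one_add_sq_cocompact :
    Tendsto (fun z : ℝ => (Real.sqrt (1 + z ^ 2))⁻¹) (cocompact ℝ) (𝓝 0) := by
  refine Tendsto.inv_tendsto_atTop (tendsto_atTop_mono (fun z => ?_) tendsto_norm_cocompact_atTop)
  exact Real.abs_le_sqrt (by linarith)

theorem tendsto_bM_MN_cocompact (s : ℝ) : Tendsto (bM_MN s) (cocompact ℝ) (𝓝 (6 / 5)) := by
  have hcont : Continuous fun u : ℝ =>
      6 / 5 + (14 * s * u + 4 * Real.sqrt (s * u * (6 * s * u + 15))) / 25 := by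
    fun_prop
  convert (hcont.tendsto 0).comp tendsto_inv_sqrt_one_add_sq_cocompact using 2
  · exact funext (bM_MN_eq_inv_sqrt s)
  · simp

end MiyamotoNagai

open MiyamotoNagai in
/-- For the MN disk, the infimum over `z` of `b_M(z)` equals `6/5`; for `s > 0`
the value `6/5` is never attained (`b_M(z) > 6/5` for all `z`), and `b_M(z) → 6/5`
as `|z| → ∞`. -/
theorem stmt3 (s : ℝ) (hs : 0 ≤ s) :
    (⨅ z : ℝ, bM_MN s z) = 6 / 5 ∧
    (0 < s → ∀ z : ℝ, 6 / 5 < bM_MN s z) ∧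
    Tendsto (fun z => bM_MN s z) atTop (nhds (6 / 5)) ∧
    Tendsto (fun z => bM_MN s z) atBot (nhds (6 / 5)) := by
  have htop := (tendsto_bM_MN_cocompact s).mono_left atTop_le_cocompact
  exact ⟨ciInf_eq_of_forall_ge_of_tendsto (le_bM_MN hs) htop, fun hs' => lt_bM_MN hs', htop,
    (tendsto_bM_MN_cocompact s).mono_left atBot_le_cocompact⟩
end

section
/- For the Binney logarithmic halo, the sign of D changes only when q < √(2/3): for q ≥ √(2/3), the quantity determining D is nonpositive for all (R,z) with R > 0, while for 1/√2 ≤ q < √(2/3) the region D > 0 is exactly {(R,z) : z > q²√(3+R²)/√(2−3q²)}. -/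
/-- Numerator (up to a positive factor) of `D` for the Binney logarithmic halo. -/
noncomputable def hBinney (q R z : ℝ) : ℝ :=
  q ^ 6 + q ^ 4 * z ^ 2 + q ^ 6 * R ^ 2
    - 2 * q ^ 2 * (q ^ 4 * R ^ 2 + (2 * q ^ 2 - 1) * z ^ 2 + 2 * q ^ 4)

/-- For the Binney logarithmic halo with `q > 0`: `h(R,z) > 0` iff
`(2−3q²)z² > q⁴(3+R²)`; for `q² ≥ 2/3` one has `h ≤ 0` everywhere; and for
`q² < 2/3` and `z ≥ 0`, `h(R,z) > 0` iff `z > q²√(3+R²)/√(2−3q²)`. -/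
theorem stmt11 (q : ℝ) (hq : 0 < q) :
    (∀ R z : ℝ, 0 < hBinney q R z ↔ q ^ 4 * (3 + R ^ 2) < (2 - 3 * q ^ 2) * z ^ 2) ∧
    (2 / 3 ≤ q ^ 2 → ∀ R z : ℝ, hBinney q R z ≤ 0) ∧
    (q ^ 2 < 2 / 3 → ∀ R z : ℝ, 0 ≤ z →
      (0 < hBinney q R z ↔
        q ^ 2 * Real.sqrt (3 + R ^ 2) / Real.sqrt (2 - 3 * q ^ 2) < z)) := by
  have hq2 : 0 < q ^ 2 := by positivity
  have key : ∀ R z : ℝ, hBinney q R z =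
      q ^ 2 * ((2 - 3 * q ^ 2) * z ^ 2 - q ^ 4 * (3 + R ^ 2)) := by
    intro R z; unfold hBinney; ring
  have main : ∀ R z : ℝ, 0 < hBinney q R z ↔
      q ^ 4 * (3 + R ^ 2) < (2 - 3 * q ^ 2) * z ^ 2 := by
    intro R z
    rw [key]
    constructor
    · intro h; nlinarith
    · intro h; nlinarith
  refine ⟨main, ?_, ?_⟩
  · intro hle R z
    by_contra hpos
    push_neg at hpos
    rw [main] at hpos
    nlinarith [sq_nonneg z, sq_nonneg R, sq_nonneg (q^2)]
  · intro hlt R z hz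
    rw [main]
    have ht : 0 < 2 - 3 * q ^ 2 := by linarith
    set s := Real.sqrt (3 + R ^ 2) with hs
    set t := Real.sqrt (2 - 3 * q ^ 2) with htdef
    have hs2 : s ^ 2 = 3 + R ^ 2 := Real.sq_sqrt (by positivity)
    have ht2 : t ^ 2 = 2 - 3 * q ^ 2 := Real.sq_sqrt (le_of_lt ht)
    have hsn : 0 ≤ s := Real.sqrt_nonneg _
    have htp : 0 < t := Real.sqrt_pos.mpr ht
    rw [div_lt_iff₀ htp]
    constructor
    · intro h
      -- q^4 s^2 < t^2 z^2, both q^2 s and z t nonneg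
      have h1 : (q ^ 2 * s) ^ 2 < (z * t) ^ 2 := by
        have : q ^ 4 * s ^ 2 < t ^ 2 * z ^ 2 := by rw [hs2, ht2]; linarith
        nlinarith
      have h2 : 0 ≤ q ^ 2 * s := by positivity
      have h3 : 0 ≤ z * t := by positivity
      nlinarith
    · intro h
      have h2 : 0 ≤ q ^ 2 * s := by positivity
      have h1 : (q ^ 2 * s) ^ 2 < (z * t) ^ 2 := by nlinarith
      have := calc q ^ 4 * (3 + R ^ 2) = (q ^ 2 * s) ^ 2 := by rw [← hs2]; ring
        _ < (z * t) ^ 2 := h1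
        _ = (2 - 3 * q ^ 2) * z ^ 2 := by rw [← ht2]; ring
      exact this
end
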